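/- If G is a connected graph with minimum degree at least 2 that is neither a tree nor a cycle, and (−ρ(K)y, y)^T is an eigenvector of K for its spectral radius ρ(K), then y can be chosen to be entrywise positive. -/

import Mathlib

/-!
For `t ≠ 0`, `(-t y, y)` is a `t`-eigenvector of `K` iff `(A - t⁻¹ (D - I)) y = t y`, and
`A - t⁻¹ (D - I)` is symmetric. Let `λ(t)` be its largest eigenvalue. Since `λ(t) - t` is
continuous and negative for large `t`, `λ(ρ) > ρ` would produce some `t > ρ` with `λ(t) = t`,
that is, an eigenvalue of `K` beyond its spectral radius. Hence `λ(ρ) = ρ` and `y` maximizes the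
Rayleigh quotient of `A - ρ⁻¹ (D - I)`; the off-diagonal entries being nonnegative, so does `|y|`,
which is therefore an eigenvector as well. At a zero of `|y|` the eigen-equation forces `|y|` to
vanish at all neighbours, so by connectivity `|y|` is positive.
-/

open Matrix

/-- The matrix `K = [[A, D-I], [-I, 0]]` (over the reals). -/
def Kmatrix {V : Type*} [Fintype V] [DecidableEq V] (G : SimpleGraph V)
    [DecidableRel G.Adj] : Matrix (V ⊕ V) (V ⊕ V) ℝ :=
  Matrix.fromBlocks (G.adjMatrix ℝ) (Matrix.diagonal (fun v => (G.degree v : ℝ)) - 1) (-1) 0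

namespace Matrix

variable {n : Type*} [Fintype n]

theorem sub_inv_smul_mulVec_eq_smul_iff {R : Type*} [Field R] {A C : Matrix n n R} {t : R}
    (ht : t ≠ 0) {x : n → R} :
    (A - t⁻¹ • C) *ᵥ x = t • x ↔ C *ᵥ x = t • (A *ᵥ x - t • x) := by
  rw [sub_mulVec, smul_mulVec, sub_eq_iff_eq_add', ← sub_eq_iff_eq_add, eq_comm,
    inv_smul_eq_iff₀ ht]

/-- The largest eigenvalue of `M` when `M` is symmetric. -/
noncomputable def rayleighMax (M : Matrix n n ℝ) : ℝ :=
  sSup ((fun x => x ⬝ᵥ M *ᵥ x) '' {x | x ⬝ᵥ x = 1})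

theorem isCompact_setOf_dotProduct_self_eq_one : IsCompact {x : n → ℝ | x ⬝ᵥ x = 1} := by
  refine Metric.isCompact_of_isClosed_isBounded
    (isClosed_eq (continuous_id.dotProduct continuous_id) continuous_const) ?_
  refine (Metric.isBounded_closedBall (x := 0) (r := 1)).subset fun x (hx : x ⬝ᵥ x = 1) => ?_
  rw [mem_closedBall_zero_iff, pi_norm_le_iff_of_nonneg zero_le_one]
  intro i
  rw [Real.norm_eq_abs, ← sq_le_one_iff_abs_le_one, ← hx, dotProduct, sq]
  exact Finset.single_le_sum (fun j _ => mul_self_nonneg (x j)) (Finset.mem_univ i)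

theorem nonempty_setOf_dotProduct_self_eq_one [Nonempty n] :
    {x : n → ℝ | x ⬝ᵥ x = 1}.Nonempty := by
  classical
  obtain ⟨i⟩ := ‹Nonempty n›
  exact ⟨Pi.single i 1, by simp⟩

theorem continuous_dotProduct_mulVec_self (M : Matrix n n ℝ) :
    Continuous fun x : n → ℝ => x ⬝ᵥ M *ᵥ x :=
  continuous_id.dotProduct (continuous_const.matrix_mulVec continuous_id)

theorem dotProduct_mulVec_le_rayleighMax_mul (M : Matrix n n ℝ) (x : n → ℝ) :
    x ⬝ᵥ M *ᵥ x ≤ rayleighMax M * (x ⬝ᵥ x) := by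
  rcases eq_or_ne x 0 with rfl | hx
  · simp
  have hpos : 0 < x ⬝ᵥ x :=
    lt_of_le_of_ne (dotProduct_self_star_nonneg x) (Ne.symm (dotProduct_self_eq_zero.not.2 hx))
  set r := Real.sqrt (x ⬝ᵥ x)
  have hr : 0 < r := Real.sqrt_pos.2 hpos
  have hrr : r * r = x ⬝ᵥ x := Real.mul_self_sqrt hpos.le
  have hunit : r⁻¹ • x ⬝ᵥ r⁻¹ • x = 1 := by
    rw [smul_dotProduct, dotProduct_smul, smul_eq_mul, smul_eq_mul, ← hrr]
    field_simp
  have hle := le_csSup ((isCompact_setOf_dotProduct_self_eq_one.image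
    (continuous_dotProduct_mulVec_self M)).bddAbove) ⟨_, hunit, rfl⟩
  simp only [mulVec_smul, smul_dotProduct, dotProduct_smul, smul_eq_mul] at hle
  rw [← hrr]
  calc x ⬝ᵥ M *ᵥ x = r * r * (r⁻¹ * (r⁻¹ * (x ⬝ᵥ M *ᵥ x))) := by field_simp
    _ ≤ r * r * rayleighMax M := by gcongr; exact hle
    _ = rayleighMax M * (r * r) := mul_comm _ _

theorem rayleighMax_le [Nonempty n] {M : Matrix n n ℝ} {t : ℝ}
    (h : ∀ x : n → ℝ, x ⬝ᵥ x = 1 → x ⬝ᵥ M *ᵥ x ≤ t) : rayleighMax M ≤ t :=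
  csSup_le (nonempty_setOf_dotProduct_self_eq_one.image _) (by rintro _ ⟨x, hx, rfl⟩; exact h x hx)

theorem _root_.Continuous.rayleighMax {X : Type*} [TopologicalSpace X] {F : X → Matrix n n ℝ}
    (hF : Continuous F) : Continuous fun s => rayleighMax (F s) :=
  isCompact_setOf_dotProduct_self_eq_one.continuous_sSup
    (continuous_snd.dotProduct ((hF.comp continuous_fst).matrix_mulVec continuous_snd))

theorem mulVec_eq_smul_of_rayleighMax_le {M : Matrix n n ℝ} (hM : M.IsHermitian) {t : ℝ}
    (hmax : rayleighMax M ≤ t) {x : n → ℝ} (hx : t * (x ⬝ᵥ x) ≤ x ⬝ᵥ M *ᵥ x) :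
    M *ᵥ x = t • x := by
  classical
  have hform : ∀ v : n → ℝ, v ⬝ᵥ (t • 1 - M) *ᵥ v = t * (v ⬝ᵥ v) - v ⬝ᵥ M *ᵥ v := fun v => by
    rw [sub_mulVec, dotProduct_sub, smul_mulVec, one_mulVec, dotProduct_smul, smul_eq_mul]
  have hpsd : (t • 1 - M).PosSemidef := by
    refine PosSemidef.of_dotProduct_mulVec_nonneg
      (((isHermitian_one).smul (IsSelfAdjoint.all t)).sub hM) fun v => ?_
    rw [star_trivial, hform, sub_nonneg]
    exact (dotProduct_mulVec_le_rayleighMax_mul M v).trans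
      (mul_le_mul_of_nonneg_right hmax (dotProduct_self_star_nonneg v))
  have hker : (t • 1 - M) *ᵥ x = 0 := by
    have hnonneg := hpsd.dotProduct_mulVec_nonneg x
    rw [star_trivial, hform] at hnonneg
    rw [← hpsd.dotProduct_mulVec_zero_iff, star_trivial, hform]
    linarith
  rw [sub_mulVec, smul_mulVec, one_mulVec, sub_eq_zero] at hker
  exact hker.symm

theorem exists_mulVec_eq_rayleighMax_smul [Nonempty n] {M : Matrix n n ℝ} (hM : M.IsHermitian) :
    ∃ x ≠ 0, M *ᵥ x = rayleighMax M • x := by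
  obtain ⟨x, hx, hsup⟩ := isCompact_setOf_dotProduct_self_eq_one.exists_sSup_image_eq
    nonempty_setOf_dotProduct_self_eq_one (continuous_dotProduct_mulVec_self M).continuousOn
  refine ⟨x, fun h => by simp [h] at hx, mulVec_eq_smul_of_rayleighMax_le hM le_rfl ?_⟩
  rw [show x ⬝ᵥ x = 1 from hx, mul_one]
  exact hsup.le

theorem rayleighMax_sub_smul_le [Nonempty n] (A : Matrix n n ℝ) {C : Matrix n n ℝ}
    (hC : C.PosSemidef) {s : ℝ} (hs : 0 ≤ s) : rayleighMax (A - s • C) ≤ rayleighMax A := by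
  refine rayleighMax_le fun x hx => ?_
  have hCx := hC.dotProduct_mulVec_nonneg x
  rw [star_trivial] at hCx
  calc x ⬝ᵥ (A - s • C) *ᵥ x = x ⬝ᵥ A *ᵥ x - s * (x ⬝ᵥ C *ᵥ x) := by
        rw [sub_mulVec, dotProduct_sub, smul_mulVec, dotProduct_smul, smul_eq_mul]
    _ ≤ x ⬝ᵥ A *ᵥ x := sub_le_self _ (mul_nonneg hs hCx)
    _ ≤ rayleighMax A := by simpa [hx] using dotProduct_mulVec_le_rayleighMax_mul A x

theorem rayleighMax_sub_inv_smul_le [Nonempty n] {A C : Matrix n n ℝ} (hA : A.IsHermitian)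
    (hC : C.PosSemidef) {ρ : ℝ} (hρ : 0 < ρ)
    (h : ∀ t > ρ, ∀ x ≠ 0, (A - t⁻¹ • C) *ᵥ x ≠ t • x) :
    rayleighMax (A - ρ⁻¹ • C) ≤ ρ := by
  by_contra! hlt
  set T := max ρ (rayleighMax A) + 1
  have hρT : ρ ≤ T := by linarith [le_max_left ρ (rayleighMax A)]
  have hcont : ContinuousOn (fun t => rayleighMax (A - t⁻¹ • C) - t) (Set.Icc ρ T) :=
    ((continuous_const.sub (continuous_id.smul continuous_const)).rayleighMax.comp_continuousOn
      (continuousOn_inv₀.mono fun t ht => (hρ.trans_le ht.1).ne')).sub continuousOn_id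
  have hT : rayleighMax (A - T⁻¹ • C) - T ≤ 0 := by
    have := rayleighMax_sub_smul_le A hC (inv_nonneg.2 (hρ.trans_le hρT).le)
    linarith [le_max_right ρ (rayleighMax A)]
  obtain ⟨t, ht, hfix⟩ := intermediate_value_Icc' hρT hcont ⟨hT, (sub_pos.2 hlt).le⟩
  have hfix : rayleighMax (A - t⁻¹ • C) = t := sub_eq_zero.1 hfix
  have hρt : ρ < t := ht.1.lt_of_ne fun h => by rw [← h] at hfix; linarith
  obtain ⟨x, hx, hxt⟩ :=
    exists_mulVec_eq_rayleighMax_smul (hA.sub (hC.isHermitian.smul (IsSelfAdjoint.all t⁻¹)))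
  rw [hfix] at hxt
  exact h t hρt x hx hxt

theorem dotProduct_mulVec_le_abs {M : Matrix n n ℝ} (hM : ∀ i j, i ≠ j → 0 ≤ M i j)
    (y : n → ℝ) : y ⬝ᵥ M *ᵥ y ≤ |y| ⬝ᵥ M *ᵥ |y| := by
  simp only [dotProduct, mulVec, Finset.mul_sum, Pi.abs_apply]
  refine Finset.sum_le_sum fun i _ => Finset.sum_le_sum fun j _ => ?_
  rw [mul_left_comm, mul_left_comm |y i|]
  rcases eq_or_ne i j with rfl | hij
  · rw [← abs_mul_abs_self (y i)]
  · exact mul_le_mul_of_nonneg_left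
      ((le_abs_self _).trans (abs_mul _ _).le) (hM i j hij)

theorem mulVec_abs_eq_smul {M : Matrix n n ℝ} (hM : M.IsHermitian)
    (hoff : ∀ i j, i ≠ j → 0 ≤ M i j) {t : ℝ} (hmax : rayleighMax M ≤ t) {y : n → ℝ}
    (hy : M *ᵥ y = t • y) : M *ᵥ |y| = t • |y| := by
  refine mulVec_eq_smul_of_rayleighMax_le hM hmax ?_
  have habs : |y| ⬝ᵥ |y| = y ⬝ᵥ y :=
    Finset.sum_congr rfl fun i _ => abs_mul_abs_self (y i)
  calc t * (|y| ⬝ᵥ |y|) = y ⬝ᵥ M *ᵥ y := by rw [habs, hy, dotProduct_smul, smul_eq_mul]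
    _ ≤ |y| ⬝ᵥ M *ᵥ |y| := dotProduct_mulVec_le_abs hoff y

variable [DecidableEq n]

theorem mem_spectrum_of_mulVec_eq_smul {R : Type*} [Field R] {M : Matrix n n R} {μ : R}
    {w : n → R} (hw : w ≠ 0) (h : M *ᵥ w = μ • w) : μ ∈ spectrum R M := by
  rw [← spectrum_toLin']
  exact Module.End.HasEigenvalue.mem_spectrum (Module.End.hasEigenvalue_of_hasEigenvector
    ⟨Module.End.mem_eigenspace_iff.2 (by rwa [toLin'_apply]), hw⟩)

theorem ofReal_mem_spectrum_map_of_mulVec_eq_smul {M : Matrix n n ℝ} {t : ℝ} {w : n → ℝ}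
    (hw : w ≠ 0) (h : M *ᵥ w = t • w) : (t : ℂ) ∈ spectrum ℂ (M.map Complex.ofReal) := by
  refine mem_spectrum_of_mulVec_eq_smul (w := Complex.ofRealHom ∘ w) ?_ (funext fun i => ?_)
  · exact fun h0 => hw (funext fun i => Complex.ofReal_injective (congrFun h0 i))
  · have := RingHom.map_mulVec Complex.ofRealHom M w i
    rw [h] at this
    exact this.symm.trans (by simp)

end Matrix

namespace SimpleGraph

variable {V : Type*}

theorem adjMatrix_sub_smul_diagonal_nonneg_of_ne [DecidableEq V] (G : SimpleGraph V)
    [DecidableRel G.Adj] (s : ℝ) (d : V → ℝ) {i j : V} (hij : i ≠ j) :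
    0 ≤ (G.adjMatrix ℝ - s • diagonal d) i j := by
  rw [Matrix.sub_apply, Matrix.smul_apply, diagonal_apply_ne _ hij, smul_zero, sub_zero,
    adjMatrix_apply]
  split_ifs <;> norm_num

theorem adjMatrix_sub_smul_diagonal_pos_of_adj [DecidableEq V] (G : SimpleGraph V)
    [DecidableRel G.Adj] (s : ℝ) (d : V → ℝ) {i j : V} (hij : G.Adj i j) :
    0 < (G.adjMatrix ℝ - s • diagonal d) i j := by
  simp [hij, hij.ne]

theorem Connected.pos_of_mulVec_eq_smul [Fintype V] {G : SimpleGraph V} (hG : G.Connected)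
    {M : Matrix V V ℝ} (hadj : ∀ i j, G.Adj i j → 0 < M i j)
    (hoff : ∀ i j, i ≠ j → 0 ≤ M i j) {z : V → ℝ} (hz : 0 ≤ z) (hz0 : z ≠ 0) {t : ℝ}
    (h : M *ᵥ z = t • z) (i : V) : 0 < z i := by
  have hstep : ∀ u v, G.Adj u v → z u = 0 → z v = 0 := by
    intro u v huv hu
    have hterm : ∀ j, 0 ≤ M u j * z j := fun j => by
      rcases eq_or_ne u j with rfl | huj
      · simp [hu]
      · exact mul_nonneg (hoff u j huj) (hz j)
    have hsum : ∑ j, M u j * z j = 0 := by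
      simpa [mulVec, dotProduct, hu] using congrFun h u
    have := (Finset.sum_eq_zero_iff_of_nonneg fun j _ => hterm j).1 hsum v (Finset.mem_univ v)
    exact (mul_eq_zero.1 this).resolve_left (hadj u v huv).ne'
  refine (hz i).lt_of_ne fun hi => hz0 (funext fun v => ?_)
  obtain ⟨p⟩ := hG.preconnected i v
  induction p with
  | nil => exact hi.symm
  | cons huw _ ih => exact ih (hstep _ _ huw hi.symm).symm

end SimpleGraph

section Kmatrix

variable {V : Type*} [Fintype V] [DecidableEq V] (G : SimpleGraph V) [DecidableRel G.Adj]

theorem Kmatrix_mulVec_eq_smul_iff (t : ℝ) (x : V → ℝ) :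
    Kmatrix G *ᵥ Sum.elim (fun v => -t * x v) x = t • Sum.elim (fun v => -t * x v) x ↔
      diagonal (fun v => (G.degree v : ℝ) - 1) *ᵥ x = t • (G.adjMatrix ℝ *ᵥ x - t • x) := by
  have hx : (fun v => -t * x v) = -t • x := rfl
  rw [Kmatrix, hx, fromBlocks_mulVec, ← Sum.elim_comp_inl_inr (t • _), Sum.elim_eq_iff]
  simp only [Sum.elim_comp_inl, Sum.elim_comp_inr, Pi.smul_comp, neg_mulVec, one_mulVec,
    zero_mulVec, add_zero, neg_smul, mulVec_neg, mulVec_smul, neg_add_eq_iff_eq_add, smul_neg,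
    neg_neg, and_true, ← sub_eq_add_neg, smul_sub]
  rw [← diagonal_one, diagonal_sub]

theorem ne_zero_of_Kmatrix_mulVec_eq_smul (hdeg : ∀ v, 2 ≤ G.degree v) {t : ℝ}
    {x : V → ℝ} (hx : x ≠ 0)
    (h : Kmatrix G *ᵥ Sum.elim (fun v => -t * x v) x = t • Sum.elim (fun v => -t * x v) x) :
    t ≠ 0 := by
  rintro rfl
  refine hx (funext fun v => ?_)
  have hv : (2 : ℝ) ≤ G.degree v := by exact_mod_cast hdeg v
  have := congrFun ((Kmatrix_mulVec_eq_smul_iff G 0 x).1 h) v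
  rw [mulVec_diagonal] at this
  simpa [show (G.degree v : ℝ) - 1 ≠ 0 by linarith] using this

theorem ofReal_mem_spectrum_Kmatrix {t : ℝ} {x : V → ℝ} (hx : x ≠ 0)
    (h : Kmatrix G *ᵥ Sum.elim (fun v => -t * x v) x = t • Sum.elim (fun v => -t * x v) x) :
    (t : ℂ) ∈ spectrum ℂ ((Kmatrix G).map Complex.ofReal) :=
  ofReal_mem_spectrum_map_of_mulVec_eq_smul (fun h0 => hx (funext fun v => congrFun h0 (.inr v))) h

end Kmatrix

theorem perron_vector_Kmatrix_positive_general {V : Type*} [Fintype V] [DecidableEq V]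
    (G : SimpleGraph V) [DecidableRel G.Adj] (hconn : G.Connected)
    (hdeg : ∀ v : V, 2 ≤ G.degree v)
    (ρ : ℝ)
    (hmax : ∀ μ ∈ spectrum ℂ ((Kmatrix G).map Complex.ofReal), ‖μ‖ ≤ ρ)
    (hexists : ∃ y : V → ℝ, y ≠ 0 ∧
      Kmatrix G *ᵥ Sum.elim (fun v => -ρ * y v) y = ρ • Sum.elim (fun v => -ρ * y v) y) :
    ∃ y : V → ℝ, (∀ v : V, 0 < y v) ∧
      Kmatrix G *ᵥ Sum.elim (fun v => -ρ * y v) y = ρ • Sum.elim (fun v => -ρ * y v) y := by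
  obtain ⟨y, hy0, hyK⟩ := hexists
  have : Nonempty V := hconn.nonempty
  set C : Matrix V V ℝ := diagonal fun v => (G.degree v : ℝ) - 1
  have hC : C.PosSemidef := PosSemidef.diagonal fun v =>
    sub_nonneg.2 (Nat.one_le_cast.2 (one_le_two.trans (hdeg v)))
  have hK : ∀ {t : ℝ} (x : V → ℝ), t ≠ 0 →
      (Kmatrix G *ᵥ Sum.elim (fun v => -t * x v) x = t • Sum.elim (fun v => -t * x v) x ↔
        (G.adjMatrix ℝ - t⁻¹ • C) *ᵥ x = t • x) := fun x ht =>
    (Kmatrix_mulVec_eq_smul_iff G _ x).trans (sub_inv_smul_mulVec_eq_smul_iff ht).symm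
  have hρ : 0 < ρ :=
    ((norm_nonneg _).trans (hmax _ (ofReal_mem_spectrum_Kmatrix G hy0 hyK))).lt_of_ne'
      (ne_zero_of_Kmatrix_mulVec_eq_smul G hdeg hy0 hyK)
  have hbound : rayleighMax (G.adjMatrix ℝ - ρ⁻¹ • C) ≤ ρ := by
    refine rayleighMax_sub_inv_smul_le (G.isHermitian_adjMatrix ℝ) hC hρ
      fun t ht x hx hxt => ?_
    have := hmax _ (ofReal_mem_spectrum_Kmatrix G hx ((hK x (hρ.trans ht).ne').2 hxt))
    exact (Complex.norm_of_nonneg (hρ.trans ht).le ▸ this).not_gt ht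
  have hoff : ∀ i j, i ≠ j → 0 ≤ (G.adjMatrix ℝ - ρ⁻¹ • C) i j := fun _ _ =>
    G.adjMatrix_sub_smul_diagonal_nonneg_of_ne ρ⁻¹ _
  have hy := mulVec_abs_eq_smul ((G.isHermitian_adjMatrix ℝ).sub
    (hC.isHermitian.smul (IsSelfAdjoint.all _))) hoff hbound ((hK y hρ.ne').1 hyK)
  exact ⟨|y|, hconn.pos_of_mulVec_eq_smul (fun _ _ => G.adjMatrix_sub_smul_diagonal_pos_of_adj _ _)
    hoff (abs_nonneg y) (by simpa using hy0) hy, (hK _ hρ.ne').2 hy⟩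

/-- If `G` is a connected graph with minimum degree at least 2 that is neither a tree nor a
cycle, and `ρ` is the spectral radius of `K = [[A, D-I], [-I, 0]]` (an eigenvalue of `K`
whose modulus dominates all eigenvalues), then `K` has an eigenvector of the form
`(-ρ y, y)ᵀ` for `ρ` in which `y` is entrywise positive. -/
theorem perron_vector_Kmatrix_positive {V : Type*} [Fintype V] [DecidableEq V]
    (G : SimpleGraph V) [DecidableRel G.Adj] (hconn : G.Connected)
    (hdeg : ∀ v : V, 2 ≤ G.degree v) (htree : ¬ G.IsTree)
    (hcyc : ¬ ∃ n : ℕ, Nonempty (G ≃g SimpleGraph.cycleGraph n))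
    (ρ : ℝ) (hρ : ((ρ : ℂ)) ∈ spectrum ℂ ((Kmatrix G).map Complex.ofReal))
    (hmax : ∀ μ ∈ spectrum ℂ ((Kmatrix G).map Complex.ofReal), ‖μ‖ ≤ ρ)
    (hexists : ∃ y : V → ℝ, y ≠ 0 ∧
      Kmatrix G *ᵥ Sum.elim (fun v => -ρ * y v) y = ρ • Sum.elim (fun v => -ρ * y v) y) :
    ∃ y : V → ℝ, (∀ v : V, 0 < y v) ∧
      Kmatrix G *ᵥ Sum.elim (fun v => -ρ * y v) y = ρ • Sum.elim (fun v => -ρ * y v) y :=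
  perron_vector_Kmatrix_positive_general G hconn hdeg ρ hmax hexists
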